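/- For the planar system Σ' = -Σ(1 + 2A - C₂(Σ² - A²)), A' = A(1 + 2Σ + C₂(Σ² - A²)) with parameter C₂ > 0, the point (Σ,A) = (0, 1/√C₂) is an equilibrium whose Jacobian has eigenvalues -2/√C₂ - 2 and -2; in particular both eigenvalues are negative, so it is a hyperbolic sink. -/

import Mathlib

/-!
The line `Σ = 0` is invariant, so on it the Jacobian is lower triangular and its eigenvalues are
the diagonal entries `∂Σ'/∂Σ = -(1 + 2A) - C₂A²` and `∂A'/∂A = 1 - 3C₂A²`. At the equilibrium
`A = 1/√C₂` we have `C₂A² = 1`, which turns them into `-2 - 2/√C₂` and `-2`.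
-/

noncomputable section

/-- Extreme-tilt (v = +1) planar vector field:
`Σ' = -Σ(1 + 2A - C₂(Σ² - A²))`, `A' = A(1 + 2Σ + C₂(Σ² - A²))`. -/
def Fplus (C₂ : ℝ) : ℝ × ℝ → ℝ × ℝ := fun p =>
  (-p.1 * (1 + 2 * p.2 - C₂ * (p.1 ^ 2 - p.2 ^ 2)),
    p.2 * (1 + 2 * p.1 + C₂ * (p.1 ^ 2 - p.2 ^ 2)))

open ContinuousLinearMap Module.End

theorem hasEigenvalue_of_apply_eq_lowerTriangular {R : Type*} [CommRing R] [Nontrivial R]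
    (f : R × R →ₗ[R] R × R) {a c d : R} (hf : ∀ v, f v = (a * v.1, c * v.1 + d * v.2)) :
    HasEigenvalue f a ∧ HasEigenvalue f d := by
  have hd : HasEigenvalue f d := by
    refine hasEigenvalue_of_hasEigenvector (x := (0, 1)) ⟨?_, by simp⟩
    rw [mem_eigenspace_iff, hf]
    simp
  refine ⟨?_, hd⟩
  rcases eq_or_ne a d with rfl | had
  · exact hd
  refine hasEigenvalue_of_hasEigenvector (x := (a - d, c)) ⟨?_, by simp [sub_eq_zero, had]⟩
  rw [mem_eigenspace_iff, hf]
  ext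
  · simp
  · simp only [smul_eq_mul, Prod.smul_mk]
    ring

def planarCLM (a b c d : ℝ) : ℝ × ℝ →L[ℝ] ℝ × ℝ :=
  (a • fst ℝ ℝ ℝ + b • snd ℝ ℝ ℝ).prod (c • fst ℝ ℝ ℝ + d • snd ℝ ℝ ℝ)

@[simp]
theorem planarCLM_apply (a b c d : ℝ) (v : ℝ × ℝ) :
    planarCLM a b c d v = (a * v.1 + b * v.2, c * v.1 + d * v.2) := rfl

def jacobianFplus (C₂ : ℝ) (p : ℝ × ℝ) : ℝ × ℝ →L[ℝ] ℝ × ℝ :=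
  planarCLM (-(1 + 2 * p.2) + C₂ * (3 * p.1 ^ 2 - p.2 ^ 2)) (-2 * p.1 * (1 + C₂ * p.2))
    (2 * p.2 * (1 + C₂ * p.1)) (1 + 2 * p.1 + C₂ * (p.1 ^ 2 - 3 * p.2 ^ 2))

theorem hasFDerivAt_Fplus (C₂ : ℝ) (p : ℝ × ℝ) :
    HasFDerivAt (Fplus C₂) (jacobianFplus C₂ p) p := by
  have hx : HasFDerivAt (fun q : ℝ × ℝ => q.1) (fst ℝ ℝ ℝ) p := hasFDerivAt_fst
  have hy : HasFDerivAt (fun q : ℝ × ℝ => q.2) (snd ℝ ℝ ℝ) p := hasFDerivAt_snd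
  have hq := ((hx.pow 2).sub (hy.pow 2)).const_mul C₂
  have h1 := hx.neg.mul (((hasFDerivAt_const 1 p).add (hy.const_mul 2)).sub hq)
  have h2 := hy.mul (((hasFDerivAt_const 1 p).add (hx.const_mul 2)).add hq)
  refine (h1.prodMk h2).congr_fderiv ?_
  ext <;> simp [jacobianFplus] <;> ring

theorem Fplus_eq_zero_of_mul_sq_eq_one {C₂ y : ℝ} (h : C₂ * y ^ 2 = 1) :
    Fplus C₂ (0, y) = 0 := by
  ext
  · simp [Fplus]
  · simp only [Fplus, zero_pow two_ne_zero, Prod.snd_zero]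
    linear_combination -y * h

theorem jacobianFplus_apply_of_mul_sq_eq_one {C₂ y : ℝ} (h : C₂ * y ^ 2 = 1) (v : ℝ × ℝ) :
    jacobianFplus C₂ (0, y) v = ((-2 * y - 2) * v.1, 2 * y * v.1 + -2 * v.2) := by
  ext
  · simp only [jacobianFplus, planarCLM_apply]
    linear_combination -v.1 * h
  · simp only [jacobianFplus, planarCLM_apply]
    linear_combination -3 * v.2 * h

/-- The point `(Σ, A) = (0, 1/√C₂)` is an equilibrium of the v = +1 extreme-tilt
system whose Jacobian has the eigenvalues `-2/√C₂ - 2` and `-2`; both are negative,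
so it is a hyperbolic sink. -/
theorem P5_hyperbolic_sink (C₂ : ℝ) (hC : 0 < C₂) :
    Fplus C₂ (0, 1 / Real.sqrt C₂) = 0 ∧
    Module.End.HasEigenvalue
      ((fderiv ℝ (Fplus C₂) (0, 1 / Real.sqrt C₂)).toLinearMap)
      (-2 / Real.sqrt C₂ - 2) ∧
    Module.End.HasEigenvalue
      ((fderiv ℝ (Fplus C₂) (0, 1 / Real.sqrt C₂)).toLinearMap) (-2) ∧
    -2 / Real.sqrt C₂ - 2 < 0 ∧ (-2 : ℝ) < 0 := by
  have hs : 0 < Real.sqrt C₂ := Real.sqrt_pos.mpr hC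
  have hC_sq : C₂ * (1 / Real.sqrt C₂) ^ 2 = 1 := by
    rw [div_pow, Real.sq_sqrt hC.le]
    field_simp
  have hJ := (hasFDerivAt_Fplus C₂ (0, 1 / Real.sqrt C₂)).fderiv
  obtain ⟨hsigma, hA⟩ := hasEigenvalue_of_apply_eq_lowerTriangular
    (fderiv ℝ (Fplus C₂) (0, 1 / Real.sqrt C₂)).toLinearMap fun v => by
    rw [coe_coe, hJ, jacobianFplus_apply_of_mul_sq_eq_one hC_sq]
  refine ⟨Fplus_eq_zero_of_mul_sq_eq_one hC_sq, ?_, hA, ?_, by norm_num⟩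
  · convert hsigma using 1
    ring
  · have : 0 < 2 / Real.sqrt C₂ := by positivity
    linarith [neg_div (Real.sqrt C₂) 2]
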